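/- For every real number σ and every smooth compactly supported function u : ℝ → ℝ with support contained in (0,∞), one has ((σ−1)²/4) ∫_0^∞ u(r)² r^{σ−2} dr ≤ ∫_0^∞ r^σ u'(r)² dr. -/

import Mathlib

open MeasureTheory Set

lemma hardy_aux_integrable {K : Set ℝ} (hKc : IsCompact K) (hKcl : IsClosed K)
    (hKpos : K ⊆ Set.Ioi 0) {f : ℝ → ℝ} (hf : Continuous f)
    (hfs : Function.support f ⊆ K) (τ : ℝ) :
    IntegrableOn (fun r => f r * r ^ τ) (Set.Ioi 0) := by
  have hg : Continuous (fun r => f r * r ^ τ) := by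
    rw [continuous_iff_continuousAt]
    intro x
    by_cases hx : 0 < x
    · exact hf.continuousAt.mul (Real.continuousAt_rpow_const x τ (Or.inl hx.ne'))
    · have hxK : x ∉ K := fun h => hx (hKpos h)
      have hev : (fun r => f r * r ^ τ) =ᶠ[nhds x] fun _ => 0 := by
        filter_upwards [hKcl.isOpen_compl.mem_nhds hxK] with y hy
        have : f y = 0 := Function.notMem_support.mp (fun hs => hy (hfs hs))
        simp [this]
      exact hev.continuousAt
  have hcs : HasCompactSupport (fun r => f r * r ^ τ) := by
    refine HasCompactSupport.intro hKc fun x hx => ?_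
    have : f x = 0 := Function.notMem_support.mp (fun hs => hx (hfs hs))
    simp [this]
  exact (hg.integrable_of_hasCompactSupport hcs).integrableOn

/-- The generalized Hardy inequality on the half-line: for every `σ ∈ ℝ` and
`u ∈ C₀^∞(ℝ₊)`, `((σ-1)²/4) ∫_0^∞ u(r)² r^(σ-2) dr ≤ ∫_0^∞ r^σ u'(r)² dr`. -/
theorem generalized_hardy_inequality (σ : ℝ) (u : ℝ → ℝ) (hu : ContDiff ℝ (⊤ : ℕ∞) u)
    (hcomp : HasCompactSupport u) (hsupp : tsupport u ⊆ Set.Ioi 0) :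
    ((σ - 1) ^ 2 / 4) * ∫ r in Set.Ioi (0 : ℝ), u r ^ 2 * r ^ (σ - 2)
      ≤ ∫ r in Set.Ioi (0 : ℝ), r ^ σ * (deriv u r) ^ 2 := by
  have hu' : Continuous (deriv u) := hu.continuous_deriv (by simp)
  have huc : Continuous u := hu.continuous
  have hudiff : Differentiable ℝ u := hu.differentiable (by simp)
  rcases Set.eq_empty_or_nonempty (tsupport u) with hE | hNE
  · have hu0 : ∀ r, u r = 0 := fun r => image_eq_zero_of_notMem_tsupport (by simp [hE])
    have hU : u = 0 := funext hu0
    subst hU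
    have hd : deriv (0 : ℝ → ℝ) = fun _ => (0:ℝ) := by
      funext x; exact deriv_const x 0
    simp [hd]
  -- the compact support lies in [s, t] with 0 < s
  set K := tsupport u with hK
  have hKc : IsCompact K := hcomp
  have hKcl : IsClosed K := isClosed_tsupport u
  have hs0 : (0 : ℝ) < sInf K := hsupp (hKc.sInf_mem hNE)
  obtain ⟨t, ht⟩ := hKc.bddAbove
  set s : ℝ := sInf K with hsdef
  have hKst : K ⊆ Icc s t := fun x hx => ⟨csInf_le hKc.bddBelow hx, ht hx⟩
  -- zero outside K
  have hu_zero : ∀ r ∉ K, u r = 0 := fun r hr => image_eq_zero_of_notMem_tsupport hr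
  set c : ℝ := (σ - 1) / 2 with hc
  -- integrability facts
  have int2 : IntegrableOn (fun r => u r ^ 2 * r ^ (σ - 2)) (Set.Ioi 0) := by
    refine hardy_aux_integrable hKc hKcl hsupp (by continuity) ?_ (σ - 2)
    intro x hx
    by_contra hxK
    exact hx (by simp [hu_zero x hxK])
  have int1 : IntegrableOn (fun r => r ^ σ * deriv u r ^ 2) (Set.Ioi 0) := by
    have h := hardy_aux_integrable hKc hKcl hsupp (f := fun r => deriv u r ^ 2)
      (by continuity) ?_ σ
    · exact h.congr_fun (fun x _ => mul_comm _ _) measurableSet_Ioi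
    · intro x hx
      by_contra hxK
      have : u =ᶠ[nhds x] 0 := by
        filter_upwards [hKcl.isOpen_compl.mem_nhds hxK] with y hy using hu_zero y hy
      have hd0 : deriv u x = 0 := by
        rw [Filter.EventuallyEq.deriv_eq this]
        exact deriv_const x 0
      exact hx (by simp [hd0])
  have int3 : IntegrableOn (fun r => r ^ (σ - 1) * (u r * deriv u r)) (Set.Ioi 0) := by
    have h := hardy_aux_integrable hKc hKcl hsupp (f := fun r => u r * deriv u r)
      (by continuity) ?_ (σ - 1)
    · exact h.congr_fun (fun x _ => mul_comm _ _) measurableSet_Ioi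
    · intro x hx
      by_contra hxK
      exact hx (by simp [hu_zero x hxK])
  -- integration by parts : ∫ D = 0 where D = d/dr [ r^(σ-1) u^2 ]
  set D : ℝ → ℝ := fun r =>
    (σ - 1) * r ^ (σ - 2) * u r ^ 2 + r ^ (σ - 1) * (2 * u r * deriv u r) with hD
  have hD_zero : ∀ r ∉ K, D r = 0 := by
    intro r hr; simp [hD, hu_zero r hr]
  have key : ∫ r in Set.Ioi (0 : ℝ), D r = 0 := by
    have h1 : ∫ r in Set.Ioi (0 : ℝ), D r = ∫ r, D r :=
      setIntegral_eq_integral_of_forall_compl_eq_zero fun x hx =>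
        hD_zero x fun hK' => hx (hsupp hK')
    have h2 : ∫ r in Set.Ioc (s / 2) (t + 1), D r = ∫ r, D r :=
      setIntegral_eq_integral_of_forall_compl_eq_zero fun x hx => by
        refine hD_zero x fun hxK => hx ?_
        obtain ⟨ha, hb⟩ := hKst hxK
        exact ⟨by linarith, by linarith⟩
    have hle : s / 2 ≤ t + 1 := by
      rcases hNE with ⟨y, hy⟩
      obtain ⟨ha, hb⟩ := hKst hy
      linarith
    have h3 : ∫ r in (s/2)..(t+1), D r = ∫ r in Set.Ioc (s / 2) (t + 1), D r :=
      intervalIntegral.integral_of_le hle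
    have hderiv : ∀ x ∈ uIcc (s/2) (t+1), HasDerivAt (fun r => r ^ (σ - 1) * u r ^ 2) (D x) x := by
      intro x hx
      rw [uIcc_of_le hle] at hx
      have hxpos : 0 < x := lt_of_lt_of_le (by linarith) hx.1
      have h1 : HasDerivAt (fun r : ℝ => r ^ (σ - 1)) ((σ - 1) * x ^ (σ - 1 - 1)) x :=
        Real.hasDerivAt_rpow_const (Or.inl hxpos.ne')
      have h2 : HasDerivAt (fun r => u r ^ 2) (2 * u x * deriv u x) x := by
        have := ((hudiff x).hasDerivAt).fun_pow 2
        simpa [mul_comm, mul_assoc, mul_left_comm] using this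
      have hmul := h1.mul h2
      have harg : σ - 1 - 1 = σ - 2 := by ring
      rw [harg] at hmul
      exact hmul
    have hint : IntervalIntegrable D volume (s/2) (t+1) := by
      apply ContinuousOn.intervalIntegrable
      rw [uIcc_of_le hle]
      have hpos : ∀ x ∈ Icc (s/2) (t+1), (0:ℝ) < x := fun x hx =>
        lt_of_lt_of_le (by linarith) hx.1
      apply ContinuousOn.add
      · exact (continuousOn_const.mul (ContinuousOn.rpow_const continuousOn_id
          fun x hx => Or.inl (hpos x hx).ne')).mul (huc.continuousOn.pow 2)
      · exact (ContinuousOn.rpow_const continuousOn_id fun x hx => Or.inl (hpos x hx).ne').mul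
          ((continuousOn_const.mul huc.continuousOn).mul hu'.continuousOn)
    have h4 : ∫ r in (s/2)..(t+1), D r =
        (t+1) ^ (σ - 1) * u (t+1) ^ 2 - (s/2) ^ (σ - 1) * u (s/2) ^ 2 :=
      intervalIntegral.integral_eq_sub_of_hasDerivAt hderiv hint
    have hu_t : u (t+1) = 0 := hu_zero _ fun h => by linarith [(hKst h).2]
    have hu_s : u (s/2) = 0 := hu_zero _ fun h => by
      have := (hKst h).1; linarith
    rw [h1, ← h2, ← h3, h4, hu_t, hu_s]
    ring
  -- from key : ∫ r^(σ-1) u u' = -c ∫ u^2 r^(σ-2)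
  have hB : ∫ r in Set.Ioi (0:ℝ), r ^ (σ - 1) * (u r * deriv u r)
      = -c * ∫ r in Set.Ioi (0:ℝ), u r ^ 2 * r ^ (σ - 2) := by
    have hsplit : ∫ r in Set.Ioi (0 : ℝ), D r =
        (σ - 1) * (∫ r in Set.Ioi (0:ℝ), u r ^ 2 * r ^ (σ - 2))
        + 2 * ∫ r in Set.Ioi (0:ℝ), r ^ (σ - 1) * (u r * deriv u r) := by
      rw [hD]
      rw [integral_add ((int2.const_mul (σ-1)).congr
        (Filter.Eventually.of_forall fun x => by ring)) ((int3.const_mul 2).congr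
        (Filter.Eventually.of_forall fun x => by ring))]
      rw [← integral_const_mul, ← integral_const_mul]
      congr 1
      · apply setIntegral_congr_fun measurableSet_Ioi; intro x _; ring
      · apply setIntegral_congr_fun measurableSet_Ioi; intro x _; ring
    rw [hsplit] at key
    rw [hc]
    linarith
  -- expansion of the square
  have hsq : ∀ r ∈ Set.Ioi (0:ℝ),
      (r ^ (σ/2) * deriv u r + c * (r ^ (σ/2 - 1) * u r)) ^ 2
      = r ^ σ * deriv u r ^ 2 + 2 * c * (r ^ (σ - 1) * (u r * deriv u r))
        + c ^ 2 * (u r ^ 2 * r ^ (σ - 2)) := by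
    intro r hr
    have hr0 : (0:ℝ) < r := hr
    have e1 : r ^ (σ/2) * r ^ (σ/2) = r ^ σ := by
      rw [← Real.rpow_add hr0, add_halves]
    have e2 : r ^ (σ/2) * r ^ (σ/2 - 1) = r ^ (σ - 1) := by
      rw [← Real.rpow_add hr0]; congr 1; ring
    have e3 : r ^ (σ/2 - 1) * r ^ (σ/2 - 1) = r ^ (σ - 2) := by
      rw [← Real.rpow_add hr0]; congr 1; ring
    calc (r ^ (σ/2) * deriv u r + c * (r ^ (σ/2 - 1) * u r)) ^ 2
        = (r ^ (σ/2) * r ^ (σ/2)) * deriv u r ^ 2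
          + 2 * c * ((r ^ (σ/2) * r ^ (σ/2 - 1)) * (u r * deriv u r))
          + c ^ 2 * (u r ^ 2 * (r ^ (σ/2 - 1) * r ^ (σ/2 - 1))) := by ring
      _ = _ := by rw [e1, e2, e3]
  have hnonneg : 0 ≤ ∫ r in Set.Ioi (0:ℝ),
      (r ^ (σ/2) * deriv u r + c * (r ^ (σ/2 - 1) * u r)) ^ 2 :=
    setIntegral_nonneg measurableSet_Ioi fun x _ => sq_nonneg _
  have hexp : ∫ r in Set.Ioi (0:ℝ),
      (r ^ (σ/2) * deriv u r + c * (r ^ (σ/2 - 1) * u r)) ^ 2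
      = (∫ r in Set.Ioi (0:ℝ), r ^ σ * deriv u r ^ 2)
        + 2 * c * (∫ r in Set.Ioi (0:ℝ), r ^ (σ - 1) * (u r * deriv u r))
        + c ^ 2 * (∫ r in Set.Ioi (0:ℝ), u r ^ 2 * r ^ (σ - 2)) := by
    have hI2 : IntegrableOn (fun r => 2 * c * (r ^ (σ - 1) * (u r * deriv u r)))
        (Set.Ioi 0) := int3.const_mul (2*c)
    have hI3 : IntegrableOn (fun r => c ^ 2 * (u r ^ 2 * r ^ (σ - 2)))
        (Set.Ioi 0) := int2.const_mul (c^2)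
    have h5 := integral_add (μ := volume.restrict (Set.Ioi (0:ℝ))) (int1.add hI2) hI3
    have h6 := integral_add (μ := volume.restrict (Set.Ioi (0:ℝ))) int1 hI2
    simp only [Pi.add_apply] at h5 h6
    rw [setIntegral_congr_fun measurableSet_Ioi hsq, h5, h6,
      integral_const_mul, integral_const_mul]
  rw [hexp, hB] at hnonneg
  have hrw : (∫ r in Set.Ioi (0:ℝ), r ^ σ * deriv u r ^ 2)
      + 2 * c * (-c * ∫ r in Set.Ioi (0:ℝ), u r ^ 2 * r ^ (σ - 2))
      + c ^ 2 * (∫ r in Set.Ioi (0:ℝ), u r ^ 2 * r ^ (σ - 2))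
      = (∫ r in Set.Ioi (0:ℝ), r ^ σ * deriv u r ^ 2)
        - (σ - 1) ^ 2 / 4 * (∫ r in Set.Ioi (0:ℝ), u r ^ 2 * r ^ (σ - 2)) := by
    rw [hc]; ring
  rw [hrw] at hnonneg
  linarith
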